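/- arXiv:2308.15595 — 2 statements merged into one kernel-verified Lean document; each statement's English description precedes it below -/
import Mathlib

section
/- Let q be a prime power, n ≥ 2 an integer, and a, b ∈ F_q^*. Let α, β ∈ F_{q^n} satisfy Norm_{F_{q^n}/F_q}(α) = a and Tr_{F_{q^n}/F_q}(β) = b. Then the number of pairs (x, y) ∈ F_{q^n} × F_{q^n} satisfying y^q − y = α·x^{q−1} − β equals q(q−1)·N_n(a,b). (Equivalently, N_n(a,b) = (#X(F_{q^n}) − 1)/(q(q−1)), where #X(F_{q^n}) is one more than the number of affine solutions, accounting for the unique point at infinity of the nonsingular projective Artin–Schreier curve X : y^q − y = α x^{q−1} − β.) -/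
/-!
Fibre the affine points over `x`. By additive Hilbert 90, `y ^ q - y = c` has `q` solutions when
`Tr c = 0` and none otherwise; since `b ≠ 0` rules out `x = 0`, the count is `q` times the number
of units `x` with `Tr (α x ^ (q - 1)) = b`. By multiplicative Hilbert 90, `x ↦ α x ^ (q - 1)` maps
the units onto the elements of norm `a`, with fibres of size `q - 1`.

Both forms of Hilbert 90 follow by counting: `y ↦ y ^ q - y` and `x ↦ x ^ (q - 1)` land in the
kernel of the (surjective) trace, resp. norm, and their own kernels have at most `q`, resp.
`q - 1`, elements, being sets of roots of polynomials of that degree.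
-/

section GroupCounting

variable {G H M : Type*} [Group G] [Group H] [Group M]

@[to_additive]
lemma MonoidHom.card_fiber_eq_card_ker (f : G →* H) {c : H} (hc : c ∈ f.range) :
    Nat.card {x // f x = c} = Nat.card f.ker := by
  obtain ⟨x₀, rfl⟩ := hc
  exact Nat.card_congr
    { toFun x := ⟨x₀⁻¹ * x, by simp [x.2]⟩
      invFun x := ⟨x₀ * x, by simp [(f.mem_ker).mp x.2]⟩
      left_inv x := by simp
      right_inv x := by simp }

variable [Finite G]

@[to_additive]
lemma MonoidHom.range_eq_ker_and_card_ker_eq_of_card_ker_le (f : G →* G) (g : G →* M)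
    (hfg : f.range ≤ g.ker) (hcard : Nat.card f.ker ≤ Nat.card g.range) :
    f.range = g.ker ∧ Nat.card f.ker = Nat.card g.range := by
  have hf := f.ker.card_mul_index
  have hg := g.ker.card_mul_index
  rw [Subgroup.index_ker] at hf hg
  have := Finite.of_surjective _ g.rangeRestrict_surjective
  have hge : Nat.card g.ker ≤ Nat.card f.range := by
    refine Nat.le_of_mul_le_mul_right ?_ (Nat.card_pos (α := g.range))
    calc Nat.card g.ker * Nat.card g.range = Nat.card f.ker * Nat.card f.range := hg.trans hf.symm
      _ ≤ Nat.card g.range * Nat.card f.range := Nat.mul_le_mul_right _ hcard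
      _ = Nat.card f.range * Nat.card g.range := Nat.mul_comm _ _
  have hexact := Subgroup.eq_of_le_of_card_ge hfg hge
  refine ⟨hexact, Nat.eq_of_mul_eq_mul_right (Nat.card_pos (α := f.range)) ?_⟩
  rw [hf, ← hg, hexact, Nat.mul_comm]

open Classical in
@[to_additive]
lemma MonoidHom.card_fiber_eq_ite_of_card_ker_le (f : G →* G) (g : G →* M)
    (hfg : f.range ≤ g.ker) (hcard : Nat.card f.ker ≤ Nat.card g.range) (c : G) :
    Nat.card {x // f x = c} = if g c = 1 then Nat.card g.range else 0 := by
  obtain ⟨hexact, hker⟩ := f.range_eq_ker_and_card_ker_eq_of_card_ker_le g hfg hcard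
  split_ifs with hc
  · rw [f.card_fiber_eq_card_ker (hexact ▸ hc), hker]
  · rw [Nat.card_eq_zero]
    exact .inl ⟨fun x => hc (hfg ⟨x.1, x.2⟩)⟩

end GroupCounting

lemma Nat.card_subtype_prod_eq_mul {X Y : Type*} [Fintype X] [Finite Y] (R : X → Y → Prop)
    (P : X → Prop) [DecidablePred P] (k : ℕ)
    (hR : ∀ x, Nat.card {y // R x y} = if P x then k else 0) :
    Nat.card {p : X × Y // R p.1 p.2} = k * Nat.card {x // P x} := by
  rw [Nat.card_congr (Equiv.subtypeProdEquivSigmaSubtype R), Nat.card_sigma,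
    Finset.sum_congr rfl fun x _ => hR x, Finset.sum_ite, Finset.sum_const, Finset.sum_const_zero,
    smul_eq_mul, add_zero, Nat.card_eq_fintype_card, Fintype.card_subtype, mul_comm]

lemma Nat.card_subtype_comp_eq_mul {X Y : Type*} [Finite X] [Finite Y] (h : X → Y)
    (P : Y → Prop) (k : ℕ) (hk : ∀ y, P y → Nat.card {x // h x = y} = k) :
    Nat.card {x // P (h x)} = k * Nat.card {y // P y} := by
  have := Fintype.ofFinite {y // P y}
  rw [← Nat.card_congr (Equiv.sigmaSubtypeFiberEquivSubtype h fun _ => Iff.rfl), Nat.card_sigma,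
    Finset.sum_congr rfl fun y _ => hk _ y.2, Finset.sum_const, Finset.card_univ, smul_eq_mul,
    Nat.card_eq_fintype_card, mul_comm]

lemma Nat.card_units_subtype_eq {G₀ : Type*} [GroupWithZero G₀] {P : G₀ → Prop} (h0 : ¬P 0) :
    Nat.card {u : G₀ˣ // P u} = Nat.card {x : G₀ // P x} :=
  Nat.card_congr <| (unitsEquivNeZero.subtypeEquiv fun _ => Iff.rfl).trans <|
    Equiv.subtypeSubtypeEquivSubtype fun {x} hx => by rintro rfl; exact h0 hx

open Polynomial FiniteField

section FiniteFieldExtension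

variable (K L : Type*) [Field K] [Field L] [Fintype K] [Algebra K L]

lemma powMonoidHom_range_le_ker_unitsMap_norm :
    (powMonoidHom (Fintype.card K - 1) : Lˣ →* Lˣ).range ≤
      (Units.map (Algebra.norm K (S := L))).ker := by
  rintro _ ⟨x, rfl⟩
  rw [MonoidHom.mem_ker, powMonoidHom_apply, map_pow, ← Nat.card_eq_fintype_card,
    ← Nat.card_units]
  exact pow_card_eq_one'

variable [Finite L]

noncomputable def artinSchreier : L →+ L :=
  (frobeniusAlgEquivOfAlgebraic K L).toAddMonoidHom - AddMonoidHom.id L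

variable {K L} in
lemma artinSchreier_apply (y : L) : artinSchreier K L y = y ^ Fintype.card K - y := rfl

lemma card_range_trace :
    Nat.card (Algebra.trace K L).toAddMonoidHom.range = Fintype.card K := by
  rw [AddMonoidHom.range_eq_top.mpr (Algebra.trace_surjective K L), AddSubgroup.card_top,
    Nat.card_eq_fintype_card]

lemma artinSchreier_range_le_ker_trace :
    (artinSchreier K L).range ≤ (Algebra.trace K L).toAddMonoidHom.ker := by
  rintro _ ⟨y, rfl⟩
  show Algebra.trace K L (artinSchreier K L y) = 0
  rw [artinSchreier_apply, map_sub]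
  exact sub_eq_zero.mpr (Algebra.trace_eq_of_algEquiv (frobeniusAlgEquivOfAlgebraic K L) y)

lemma card_ker_artinSchreier_le :
    Nat.card (artinSchreier K L).ker ≤ Nat.card (Algebra.trace K L).toAddMonoidHom.range := by
  classical
  have hq := Fintype.one_lt_card (α := K)
  rw [card_range_trace]
  calc Nat.card (artinSchreier K L).ker
      ≤ Nat.card (X ^ Fintype.card K - X : L[X]).roots.toFinset := by
        refine Nat.card_le_card_of_injective (fun y => ⟨y, ?_⟩) fun y z h => ?_
        · simpa [mem_roots (X_pow_card_sub_X_ne_zero L hq), artinSchreier_apply]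
            using AddMonoidHom.mem_ker.mp y.2
        · exact Subtype.ext (by simpa using h)
    _ ≤ Fintype.card K := by
        rw [Nat.card_eq_fintype_card, Fintype.card_coe]
        exact (Multiset.toFinset_card_le _).trans ((card_roots' _).trans
          (X_pow_card_sub_X_natDegree_eq L hq).le)

open Classical in
lemma card_artinSchreier_fiber (c : L) :
    Nat.card {y : L // y ^ Fintype.card K - y = c} =
      if Algebra.trace K L c = 0 then Fintype.card K else 0 := by
  have := (artinSchreier K L).card_fiber_eq_ite_of_card_ker_le _
    (artinSchreier_range_le_ker_trace K L) (card_ker_artinSchreier_le K L) c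
  rwa [card_range_trace] at this

lemma card_range_unitsMap_norm :
    Nat.card (Units.map (Algebra.norm K (S := L))).range = Fintype.card K - 1 := by
  rw [MonoidHom.range_eq_top.mpr (unitsMap_norm_surjective K L), Subgroup.card_top,
    Nat.card_units, Nat.card_eq_fintype_card]

lemma card_ker_powMonoidHom_le :
    Nat.card (powMonoidHom (Fintype.card K - 1) : Lˣ →* Lˣ).ker ≤
      Nat.card (Units.map (Algebra.norm K (S := L))).range := by
  have : NeZero (Fintype.card K - 1) := ⟨Nat.sub_ne_zero_of_lt Fintype.one_lt_card⟩
  rw [card_range_unitsMap_norm]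
  exact card_rootsOfUnity L _

lemma card_pow_card_sub_one_fiber {ζ : Lˣ} (hζ : Algebra.norm K (ζ : L) = 1) :
    Nat.card {x : Lˣ // x ^ (Fintype.card K - 1) = ζ} = Fintype.card K - 1 := by
  classical
  have hζ' : Units.map (Algebra.norm K (S := L)) ζ = 1 := Units.ext hζ
  have := MonoidHom.card_fiber_eq_ite_of_card_ker_le _ _
    (powMonoidHom_range_le_ker_unitsMap_norm K L) (card_ker_powMonoidHom_le K L) ζ
  rwa [if_pos hζ', card_range_unitsMap_norm] at this

variable {K L} in
lemma Algebra.norm_mul_pow_card_sub_one (α : L) {x : L} (hx : x ≠ 0) :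
    Algebra.norm K (α * x ^ (Fintype.card K - 1)) = Algebra.norm K α := by
  rw [map_mul, map_pow, FiniteField.pow_card_sub_one_eq_one _ (Algebra.norm_ne_zero_iff.mpr hx),
    mul_one]

variable {K L} in
lemma card_mul_pow_card_sub_one_fiber {α z : L} (hα : α ≠ 0)
    (hz : Algebra.norm K z = Algebra.norm K α) :
    Nat.card {x : Lˣ // α * x ^ (Fintype.card K - 1) = z} = Fintype.card K - 1 := by
  have hz0 : z ≠ 0 := fun h =>
    hα (Algebra.norm_eq_zero_iff.mp (by rw [← hz, h, Algebra.norm_zero]))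
  lift α to Lˣ using hα.isUnit
  lift z to Lˣ using hz0.isUnit
  have hζ : Algebra.norm K ((α⁻¹ * z : Lˣ) : L) = 1 := by
    rw [Units.val_mul, map_mul, hz, ← map_mul, Units.inv_mul, map_one]
  refine (Nat.card_congr (Equiv.subtypeEquivRight fun x => ?_)).trans
    (card_pow_card_sub_one_fiber K L hζ)
  rw [eq_inv_mul_iff_mul_eq, ← Units.val_inj]
  push_cast
  rfl

end FiniteFieldExtension

theorem stmt0_general (q : ℕ)
    (Fq Fqn : Type) [Field Fq] [Field Fqn] [Fintype Fq] [Fintype Fqn]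
    [Algebra Fq Fqn]
    (hcard : Fintype.card Fq = q)
    (a b : Fq) (ha : a ≠ 0) (hb : b ≠ 0)
    (α β : Fqn) (hα : Algebra.norm Fq α = a) (hβ : Algebra.trace Fq Fqn β = b) :
    Nat.card {p : Fqn × Fqn // p.2 ^ q - p.2 = α * p.1 ^ (q - 1) - β}
      = q * (q - 1) *
        Nat.card {z : Fqn // Algebra.norm Fq z = a ∧ Algebra.trace Fq Fqn z = b} := by
  classical
  subst hcard
  set q := Fintype.card Fq
  have hα0 : α ≠ 0 := fun h => ha (by rw [← hα, h, Algebra.norm_zero])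
  have htrace (x : Fqn) :
      Algebra.trace Fq Fqn (α * x ^ (q - 1) - β) = 0 ↔
        Algebra.trace Fq Fqn (α * x ^ (q - 1)) = b := by
    rw [map_sub, hβ, sub_eq_zero]
  have hnorm (x : Fqnˣ) : Algebra.norm Fq (α * (x : Fqn) ^ (q - 1)) = a :=
    (Algebra.norm_mul_pow_card_sub_one α x.ne_zero).trans hα
  calc _ = q * Nat.card {x : Fqn // Algebra.trace Fq Fqn (α * x ^ (q - 1) - β) = 0} :=
        Nat.card_subtype_prod_eq_mul _ _ _ fun x => card_artinSchreier_fiber Fq Fqn _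
    _ = q * Nat.card {x : Fqnˣ // Algebra.trace Fq Fqn (α * (x : Fqn) ^ (q - 1)) = b} := by
        rw [Nat.card_congr (Equiv.subtypeEquivRight htrace)]
        exact congrArg _ (Nat.card_units_subtype_eq
          (by simp [q, zero_pow (Nat.sub_ne_zero_of_lt Fintype.one_lt_card), hb.symm])).symm
    _ = q * ((q - 1) *
          Nat.card {z : Fqn // Algebra.norm Fq z = a ∧ Algebra.trace Fq Fqn z = b}) := by
        rw [← Nat.card_subtype_comp_eq_mul (fun x : Fqnˣ => α * (x : Fqn) ^ (q - 1))
          (fun z => Algebra.norm Fq z = a ∧ Algebra.trace Fq Fqn z = b) _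
          fun z hz => card_mul_pow_card_sub_one_fiber hα0 (hz.1.trans hα.symm)]
        exact congrArg _ (Nat.card_congr (Equiv.subtypeEquivRight fun x => by simp [hnorm x]))
    _ = _ := (mul_assoc _ _ _).symm

/-- The number of affine points on the Artin–Schreier curve
`y^q - y = α x^(q-1) - β` over `F_{q^n}` equals `q(q-1) · N_n(a,b)`. -/
theorem stmt0 (q n : ℕ) (hq : IsPrimePow q) (hn : 2 ≤ n)
    (Fq Fqn : Type) [Field Fq] [Field Fqn] [Fintype Fq] [Fintype Fqn]
    [Algebra Fq Fqn]
    (hcard : Fintype.card Fq = q) (hcardn : Fintype.card Fqn = q ^ n)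
    (a b : Fq) (ha : a ≠ 0) (hb : b ≠ 0)
    (α β : Fqn) (hα : Algebra.norm Fq α = a) (hβ : Algebra.trace Fq Fqn β = b) :
    Nat.card {p : Fqn × Fqn // p.2 ^ q - p.2 = α * p.1 ^ (q - 1) - β}
      = q * (q - 1) *
        Nat.card {z : Fqn // Algebra.norm Fq z = a ∧ Algebra.trace Fq Fqn z = b} :=
  stmt0_general q Fq Fqn hcard a b ha hb α β hα hβ
end

section
/- Let n ≥ 2 be a prime number and let P_n(1,1) be the number of monic irreducible polynomials of degree n over F_2 whose coefficient of T^{n−1} equals 1 and whose constant term equals 1. Then |P_n(1,1) − 2^{n−1}/n| ≤ 1/n, the inequality being between real numbers. -/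
/-!
Let `K = 𝔽_{2^n}`. As `n` is prime, every `x ∈ K \ 𝔽₂` has a minimal polynomial of degree
`n = [K : 𝔽₂]`; its `T^{n-1}`-coefficient is `Tr x` (characteristic 2) and its constant
coefficient is nonzero, hence `1`. Each polynomial counted by `P_n(1,1)` has exactly `n` roots
in `K`, so `n P_n(1,1)` is the number of elements of trace one outside `𝔽₂`. The trace is a
surjective linear form, so `2^{n-1}` elements have trace one, and of `0, 1 ∈ 𝔽₂` only `1` can,
exactly when `Tr 1 = n` is odd. Hence `n P_n(1,1) = 2^{n-1} - (n mod 2)`.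
-/

open Polynomial Finset IntermediateField

section

variable {F K : Type*} [Field F] [Field K] [Algebra F K]

theorem trace_eq_neg_nextCoeff_of_natDegree_minpoly_eq_finrank [FiniteDimensional F K] {x : K}
    (hx : (minpoly F x).natDegree = Module.finrank F K) :
    Algebra.trace F K x = -(minpoly F x).nextCoeff := by
  have hgen : Module.finrank F F⟮x⟯ = Module.finrank F K := by
    rw [adjoin.finrank (.of_finite F x), hx]
  have htop : Module.finrank F⟮x⟯ K = 1 := by
    have := Module.finrank_mul_finrank F F⟮x⟯ K
    rw [hgen] at this
    exact (Nat.mul_eq_left Module.finrank_pos.ne').mp this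
  rw [trace_eq_finrank_mul_minpoly_nextCoeff, htop, Nat.cast_one, one_mul]

theorem natDegree_minpoly_eq_one_or_eq_finrank [FiniteDimensional F K]
    (hp : (Module.finrank F K).Prime) (x : K) :
    (minpoly F x).natDegree = 1 ∨ (minpoly F x).natDegree = Module.finrank F K :=
  hp.eq_one_or_self_of_dvd _ (minpoly.degree_dvd (.of_finite F x))

theorem card_filter_trace_eq_mul_card [Fintype F] [DecidableEq F] [Fintype K] (a : F) :
    #{x : K | Algebra.trace F K x = a} * Fintype.card F = Fintype.card K := by
  have hsurj := Algebra.trace_surjective F K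
  calc #{x : K | Algebra.trace F K x = a} * Fintype.card F
      = ∑ b : F, #{x : K | Algebra.trace F K x = a} := by
        rw [sum_const, card_univ, smul_eq_mul, mul_comm]
    _ = ∑ b : F, #{x : K | Algebra.trace F K x = b} :=
      sum_congr rfl fun b _ ↦ AddMonoidHom.card_fiber_eq_of_mem_range _ (hsurj a) (hsurj b)
    _ = Fintype.card K :=
      (card_eq_sum_card_fiberwise fun _ _ ↦ mem_coe.2 (mem_univ _)).symm

theorem exists_minpoly_eq_of_natDegree_dvd_finrank [Finite K] {f : F[X]} (hirr : Irreducible f)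
    (hmon : f.Monic) (hdvd : f.natDegree ∣ Module.finrank F K) : ∃ x : K, minpoly F x = f := by
  have : Fact (Irreducible f) := ⟨hirr⟩
  obtain ⟨φ⟩ := FiniteField.nonempty_algHom_of_finrank_dvd (F := F) (K := AdjoinRoot f) (L := K)
    (by rwa [(AdjoinRoot.powerBasis hirr.ne_zero).finrank, AdjoinRoot.powerBasis_dim])
  refine ⟨φ (AdjoinRoot.root f), (minpoly.eq_of_irreducible_of_monic hirr ?_ hmon).symm⟩
  rw [aeval_algHom_apply, AdjoinRoot.aeval_eq, AdjoinRoot.mk_self, map_zero]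

open scoped Classical in
theorem card_filter_minpoly_eq_natDegree [Fintype K] [Normal F K] [Algebra.IsSeparable F K]
    (x : K) : #{y : K | minpoly F y = minpoly F x} = (minpoly F x).natDegree := by
  have hx : IsIntegral F x := .of_finite F x
  rw [← card_rootSet_eq_natDegree (Algebra.IsSeparable.isSeparable F x) (Normal.splits' x),
    ← Set.toFinset_card]
  congr 1
  ext y
  rw [mem_filter, Set.mem_toFinset, mem_rootSet, and_iff_right (mem_univ y)]
  exact ⟨fun h ↦ ⟨minpoly.ne_zero hx, h ▸ minpoly.aeval F y⟩, fun ⟨_, h⟩ ↦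
    (minpoly.eq_of_irreducible_of_monic (minpoly.irreducible hx) h (minpoly.monic hx)).symm⟩

open scoped Classical in
theorem card_filter_minpoly_mem [Fintype K] (s : Set F[X]) {n : ℕ}
    (hn : n ∣ Module.finrank F K) (hs : ∀ f ∈ s, Irreducible f ∧ f.Monic ∧ f.natDegree = n) :
    #{x : K | minpoly F x ∈ s} = n * s.ncard := by
  set T : Finset K := {x | minpoly F x ∈ s}
  have himage : (T.image (minpoly F) : Set F[X]) = s := by
    ext f
    simp only [coe_image, Set.mem_image, mem_coe, T, mem_filter, mem_univ, true_and]
    refine ⟨fun ⟨x, hx, hxf⟩ ↦ hxf ▸ hx, fun hf ↦ ?_⟩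
    obtain ⟨hirr, hmon, hdeg⟩ := hs f hf
    obtain ⟨x, rfl⟩ := exists_minpoly_eq_of_natDegree_dvd_finrank (K := K) hirr hmon (hdeg ▸ hn)
    exact ⟨x, hf, rfl⟩
  have hfiber : ∀ f ∈ T.image (minpoly F), #{x ∈ T | minpoly F x = f} = n := by
    intro f hf
    obtain ⟨x, hx, rfl⟩ := mem_image.1 hf
    rw [filter_filter, ← (hs _ (mem_filter.1 hx).2).2.2, ← card_filter_minpoly_eq_natDegree x]
    congr 1
    exact filter_congr fun y _ ↦ and_iff_right_of_imp fun h ↦ h ▸ (mem_filter.1 hx).2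
  rw [card_eq_sum_card_fiberwise fun x hx ↦ mem_image_of_mem (minpoly F) hx, sum_congr rfl hfiber,
    sum_const, smul_eq_mul, mul_comm, ← Set.ncard_coe_finset, himage]

theorem card_filter_trace_eq_and_natDegree_minpoly_eq_one [Fintype F] [DecidableEq F] [Fintype K]
    (a : F) :
    #{x : K | Algebra.trace F K x = a ∧ (minpoly F x).natDegree = 1} =
      #{c : F | (Module.finrank F K : F) * c = a} := by
  rw [← card_map ⟨algebraMap F K, (algebraMap F K).injective⟩]
  congr 1
  ext x
  simp only [mem_filter, mem_univ, true_and, mem_map, Function.Embedding.coeFn_mk,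
    minpoly.natDegree_eq_one_iff, RingHom.mem_range]
  constructor
  · rintro ⟨htr, c, rfl⟩
    exact ⟨c, by rwa [Algebra.trace_algebraMap, nsmul_eq_mul] at htr, rfl⟩
  · rintro ⟨c, hc, rfl⟩
    exact ⟨by rwa [Algebra.trace_algebraMap, nsmul_eq_mul], c, rfl⟩

end

theorem card_filter_natCast_mul_eq_one_zmod_two (m : ℕ) :
    #{c : ZMod 2 | (m : ZMod 2) * c = 1} = m % 2 := by
  rw [← ZMod.natCast_mod m 2]
  rcases Nat.mod_two_eq_zero_or_one m with h | h <;> rw [h] <;> decide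

/-- The set counted by `P_n(1,1)`. -/
def irreduciblesTraceNormOne (n : ℕ) : Set (ZMod 2)[X] :=
  {f | f.Monic ∧ Irreducible f ∧ f.natDegree = n ∧ f.coeff (n - 1) = 1 ∧ f.coeff 0 = 1}

section

variable {K : Type*} [Field K] [Fintype K] [Algebra (ZMod 2) K] {n : ℕ}

theorem minpoly_mem_irreduciblesTraceNormOne_iff (hK : Module.finrank (ZMod 2) K = n)
    (hn : 2 ≤ n) (x : K) :
    minpoly (ZMod 2) x ∈ irreduciblesTraceNormOne n ↔
      Algebra.trace (ZMod 2) K x = 1 ∧ (minpoly (ZMod 2) x).natDegree = n := by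
  have hx : IsIntegral (ZMod 2) x := .of_finite _ x
  have htrace : (minpoly (ZMod 2) x).natDegree = n →
      Algebra.trace (ZMod 2) K x = (minpoly (ZMod 2) x).coeff (n - 1) := fun hdeg ↦ by
    rw [trace_eq_neg_nextCoeff_of_natDegree_minpoly_eq_finrank (hdeg.trans hK.symm),
      nextCoeff_of_natDegree_pos (by omega), hdeg, ZMod.neg_eq_self_mod_two]
  constructor
  · rintro ⟨-, -, hdeg, hcoeff, -⟩
    exact ⟨(htrace hdeg).trans hcoeff, hdeg⟩
  · rintro ⟨htr, hdeg⟩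
    have hx0 : x ≠ 0 := by
      rintro rfl
      rw [minpoly.zero, natDegree_X] at hdeg
      omega
    have hcoeff0 := minpoly.coeff_zero_ne_zero hx hx0
    refine ⟨minpoly.monic hx, minpoly.irreducible hx, hdeg, (htrace hdeg).symm.trans htr, ?_⟩
    revert hcoeff0
    generalize (minpoly (ZMod 2) x).coeff 0 = c
    revert c
    decide

open scoped Classical in
theorem card_filter_minpoly_mem_irreduciblesTraceNormOne_add_mod_two
    (hK : Module.finrank (ZMod 2) K = n) (hn : n.Prime) :
    #{x : K | minpoly (ZMod 2) x ∈ irreduciblesTraceNormOne n} + n % 2 = 2 ^ (n - 1) := by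
  have htrace := card_filter_trace_eq_mul_card (K := K) (1 : ZMod 2)
  rw [ZMod.card, Module.card_eq_pow_finrank (K := ZMod 2), ZMod.card, hK] at htrace
  have hsplit := card_filter_add_card_filter_not (s := {x : K | Algebra.trace (ZMod 2) K x = 1})
    (fun x ↦ (minpoly (ZMod 2) x).natDegree = n)
  simp only [filter_filter] at hsplit
  have hdich := natDegree_minpoly_eq_one_or_eq_finrank (K := K) (hK ▸ hn)
  simp only [hK] at hdich
  have hdeg : ∀ x : K, ¬(minpoly (ZMod 2) x).natDegree = n ↔ (minpoly (ZMod 2) x).natDegree = 1 :=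
    fun x ↦ ⟨(hdich x).resolve_right, fun h ↦ h ▸ hn.one_lt.ne⟩
  simp only [hdeg] at hsplit
  rw [card_filter_trace_eq_and_natDegree_minpoly_eq_one, hK,
    card_filter_natCast_mul_eq_one_zmod_two] at hsplit
  have hpow : 2 ^ n = 2 ^ (n - 1) * 2 := by rw [← pow_succ, Nat.sub_add_cancel hn.one_lt.le]
  simp only [minpoly_mem_irreduciblesTraceNormOne_iff hK hn.two_le]
  omega

end

theorem mul_ncard_irreduciblesTraceNormOne_add_mod_two {n : ℕ} (hn : n.Prime) :
    n * (irreduciblesTraceNormOne n).ncard + n % 2 = 2 ^ (n - 1) := by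
  have : Fintype (GaloisField 2 n) := .ofFinite _
  have hK := GaloisField.finrank 2 hn.ne_zero
  rw [← card_filter_minpoly_mem _ (dvd_of_eq hK.symm) fun f hf ↦ ⟨hf.2.1, hf.1, hf.2.2.1⟩]
  exact card_filter_minpoly_mem_irreduciblesTraceNormOne_add_mod_two hK hn

/-- for prime `n`, `|P_n(1,1) - 2^(n-1)/n| ≤ 1/n` over `F_2`. -/
theorem stmt16 (n : ℕ) (hn : n.Prime)
    (P : ℕ)
    (hP : P = Nat.card {f : Polynomial (ZMod 2) // f.Monic ∧ Irreducible f ∧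
        f.natDegree = n ∧ f.coeff (n - 1) = 1 ∧ f.coeff 0 = 1}) :
    |(P : ℝ) - 2 ^ (n - 1) / (n : ℝ)| ≤ 1 / (n : ℝ) := by
  have hcount : n * P + n % 2 = 2 ^ (n - 1) := hP ▸ mul_ncard_irreduciblesTraceNormOne_add_mod_two hn
  have hn0 : (0 : ℝ) < n := by exact_mod_cast hn.pos
  have hdiff : (P : ℝ) - 2 ^ (n - 1) / n = -((n % 2 : ℕ) : ℝ) / n := by
    rw [eq_div_iff hn0.ne', sub_mul, div_mul_cancel₀ _ hn0.ne']
    have := congrArg (Nat.cast : ℕ → ℝ) hcount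
    push_cast at this ⊢
    linarith
  rw [hdiff, abs_div, abs_neg, Nat.abs_cast, abs_of_pos hn0]
  gcongr
  exact_mod_cast Nat.le_of_lt_succ (Nat.mod_lt n two_pos)
end
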